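/- Let A be a subset of Baire space, let κ be an ordinal, and let φ⃗ = ⟨φ_i : i < ω⟩ be a scale on A with each norm φ_i : A → κ. Let T be the set of pairs (s, f) of finite sequences of equal length n, with s ∈ ℕ^n and f ∈ κ^n, such that there is some x ∈ A with s = x↾n and f(i) = φ_i(x) for each i < n. Then T is a tree on ℕ × κ and p[T] = A. -/

import Mathlib

/-- The restriction `x↾n` of an infinite sequence `x : ℕ → β` to a finite
sequence (list) of length `n`. -/
def seqRestrict {β : Type*} (x : ℕ → β) (n : ℕ) : List β :=
  List.ofFn fun i : Fin n => x i

/-- `T` is a tree on `ℕ × κ`: a set of pairs of finite sequences of equal length, with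
entries of the second coordinate ordinals `< κ`, closed under simultaneous restriction. -/
def IsTreeOn (κ : Ordinal) (T : Set (List ℕ × List Ordinal)) : Prop :=
  ∀ p ∈ T, p.1.length = p.2.length ∧ (∀ o ∈ p.2, o < κ) ∧
    ∀ i ≤ p.1.length, (p.1.take i, p.2.take i) ∈ T

/-- `(x, g)` is a branch of the tree `T` on `ℕ × κ`. -/
def IsBranchOf (T : Set (List ℕ × List Ordinal)) (x : ℕ → ℕ) (g : ℕ → Ordinal) : Prop :=
  ∀ n : ℕ, (seqRestrict x n, seqRestrict g n) ∈ T

/-- The projection `p[T]` of the set of branches of `T` to the first coordinate. -/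
def treeProj (T : Set (List ℕ × List Ordinal)) : Set (ℕ → ℕ) :=
  {x | ∃ g : ℕ → Ordinal, IsBranchOf T x g}

/-- `φ = ⟨φ n : n < ω⟩` is a scale on `A`: whenever `xs` is a sequence of elements of `A`
converging pointwise to `x`, and for each `n` the sequence `⟨φ n (xs i) : i < ω⟩` is
eventually constant with value `lam n`, then `x ∈ A` and `φ n x ≤ lam n` for all `n`. -/
def IsScale (A : Set (ℕ → ℕ)) (φ : ℕ → (ℕ → ℕ) → Ordinal) : Prop :=
  ∀ (xs : ℕ → (ℕ → ℕ)) (x : ℕ → ℕ) (lam : ℕ → Ordinal),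
    (∀ i, xs i ∈ A) →
    (∀ m : ℕ, ∃ N : ℕ, ∀ i ≥ N, xs i m = x m) →
    (∀ n : ℕ, ∃ N : ℕ, ∀ i ≥ N, φ n (xs i) = lam n) →
    x ∈ A ∧ ∀ n : ℕ, φ n x ≤ lam n

/-- The tree of a scale: the set of pairs `(s, f)` of equal length `n` such that for some
`x ∈ A`, `s = x↾n` and `f i = φ i x` for `i < n`. -/
def scaleTree (A : Set (ℕ → ℕ)) (φ : ℕ → (ℕ → ℕ) → Ordinal) :
    Set (List ℕ × List Ordinal) :=
  {p | ∃ n : ℕ, ∃ x ∈ A, p.1 = seqRestrict x n ∧ p.2 = List.ofFn fun i : Fin n => φ i x}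

section seqRestrict

variable {β : Type*}

@[simp]
lemma length_seqRestrict (x : ℕ → β) (n : ℕ) : (seqRestrict x n).length = n :=
  List.length_ofFn

lemma take_seqRestrict (x : ℕ → β) {i n : ℕ} (h : i ≤ n) :
    (seqRestrict x n).take i = seqRestrict x i := by
  apply List.ext_getElem
  · simp [h]
  · intro m _ _
    simp [seqRestrict]

lemma seqRestrict_eq_seqRestrict_iff {x y : ℕ → β} {n k : ℕ} :
    seqRestrict x n = seqRestrict y k ↔ n = k ∧ ∀ m < n, x m = y m := by
  constructor
  · intro h
    obtain rfl : n = k := by simpa using congrArg List.length h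
    exact ⟨rfl, fun m hm => congrFun (List.ofFn_injective h) ⟨m, hm⟩⟩
  · rintro ⟨rfl, h⟩
    exact congrArg List.ofFn (funext fun m => h m m.isLt)

end seqRestrict

section scaleTree

variable {A : Set (ℕ → ℕ)} {φ : ℕ → (ℕ → ℕ) → Ordinal}

lemma mem_scaleTree {p : List ℕ × List Ordinal} :
    p ∈ scaleTree A φ ↔
      ∃ n, ∃ x ∈ A, p = (seqRestrict x n, seqRestrict (fun i => φ i x) n) := by
  simp only [scaleTree, Set.mem_ofPred_eq, Prod.ext_iff]
  rfl

lemma scaleTree_isTreeOn {κ : Ordinal} (hbound : ∀ n, ∀ x ∈ A, φ n x < κ) :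
    IsTreeOn κ (scaleTree A φ) := by
  rintro p hp
  obtain ⟨n, x, hx, rfl⟩ := mem_scaleTree.1 hp
  refine ⟨by simp, ?_, fun i hi => ?_⟩
  · rintro o ho
    obtain ⟨i, rfl⟩ := List.mem_ofFn.1 ho
    exact hbound i x hx
  · rw [length_seqRestrict] at hi
    rw [take_seqRestrict _ hi, take_seqRestrict _ hi]
    exact mem_scaleTree.2 ⟨i, x, hx, rfl⟩

lemma subset_treeProj_scaleTree : A ⊆ treeProj (scaleTree A φ) :=
  fun x hx => ⟨fun n => φ n x, fun n => mem_scaleTree.2 ⟨n, x, hx, rfl⟩⟩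

lemma IsBranchOf.exists_agreeing_below {x : ℕ → ℕ} {g : ℕ → Ordinal}
    (h : IsBranchOf (scaleTree A φ) x g) (n : ℕ) :
    ∃ y ∈ A, ∀ m < n, y m = x m ∧ φ m y = g m := by
  obtain ⟨k, y, hy, hnode⟩ := mem_scaleTree.1 (h n)
  obtain ⟨hx, hg⟩ := Prod.mk.inj hnode
  obtain ⟨rfl, hxy⟩ := seqRestrict_eq_seqRestrict_iff.1 hx
  obtain ⟨-, hgφ⟩ := seqRestrict_eq_seqRestrict_iff.1 hg
  exact ⟨y, hy, fun m hm => ⟨(hxy m hm).symm, (hgφ m hm).symm⟩⟩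

/-- The `n`-th node of a branch `(x, g)` is witnessed by some `yₙ ∈ A`; the `yₙ` converge to `x`
and `φ m yₙ = g m` once `n > m`, so the scale property puts `x` in `A`. -/
lemma treeProj_scaleTree_subset (hscale : IsScale A φ) : treeProj (scaleTree A φ) ⊆ A := by
  rintro x ⟨g, hg⟩
  choose ys hysA hys using hg.exists_agreeing_below
  exact (hscale ys x g hysA (fun m => ⟨m + 1, fun i hi => (hys i m hi).1⟩)
    (fun m => ⟨m + 1, fun i hi => (hys i m hi).2⟩)).1

end scaleTree

/-- If `φ` is a scale on `A` with norms into `κ`, then the tree of the scale is a tree on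
`ℕ × κ` and its projection is exactly `A`. -/
theorem statement2 (A : Set (ℕ → ℕ)) (κ : Ordinal) (φ : ℕ → (ℕ → ℕ) → Ordinal)
    (hscale : IsScale A φ) (hbound : ∀ n : ℕ, ∀ x ∈ A, φ n x < κ) :
    IsTreeOn κ (scaleTree A φ) ∧ treeProj (scaleTree A φ) = A :=
  ⟨scaleTree_isTreeOn hbound,
    (treeProj_scaleTree_subset hscale).antisymm subset_treeProj_scaleTree⟩
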